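/- Let Q be a directed set that is the union of countably many ω₁-directed subsets (subsets in which every countable subset has an upper bound within that subset). Then for every nonprincipal ultrafilter U on ω such that the cardinal cf(⟨U, ⊇⟩) has uncountable cofinality, ⟨U, ⊇⟩ is not Tukey reducible to Q. -/

import Mathlib

open Cardinal

/-- A subset `S` of a quasiorder `⟨α, r⟩` is bounded if it has an upper bound. -/
def TBounded {α : Type*} (r : α → α → Prop) (S : Set α) : Prop :=
  ∃ b, ∀ x ∈ S, r x b

/-- A subset `C` of `⟨α, r⟩` is cofinal if every element lies below a member of `C`. -/
def TCofinal {α : Type*} (r : α → α → Prop) (C : Set α) : Prop :=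
  ∀ x, ∃ c ∈ C, r x c

/-- A Tukey map: the image of every unbounded set is unbounded. -/
def IsTukeyMap {α β : Type*} (ra : α → α → Prop) (rb : β → β → Prop) (f : α → β) : Prop :=
  ∀ S : Set α, ¬ TBounded ra S → ¬ TBounded rb (f '' S)

/-- Tukey reducibility `P ≤_T Q`: there is a Tukey map from `P` to `Q`. -/
def TukeyLE {α β : Type*} (ra : α → α → Prop) (rb : β → β → Prop) : Prop :=
  ∃ f : α → β, IsTukeyMap ra rb f

/-- Tukey equivalence `P ≡_T Q`. -/
def TukeyEquiv {α β : Type*} (ra : α → α → Prop) (rb : β → β → Prop) : Prop :=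
  TukeyLE ra rb ∧ TukeyLE rb ra

/-- Strict Tukey reducibility `P <_T Q`. -/
def TukeyLT {α β : Type*} (ra : α → α → Prop) (rb : β → β → Prop) : Prop :=
  TukeyLE ra rb ∧ ¬ TukeyLE rb ra

/-- A directed set: a preorder in which every finite subset (in particular `∅` and pairs)
has an upper bound; equivalently, a nonempty directed preorder. -/
structure IsDirectedSet {α : Type*} (r : α → α → Prop) : Prop where
  nonempty : Nonempty α
  refl : ∀ x, r x x
  trans : ∀ {x y z}, r x y → r y z → r x z
  directed : ∀ x y, ∃ z, r x z ∧ r y z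

/-- The cofinality of a quasiorder: the least cardinality of a cofinal subset. -/
noncomputable def tCof {α : Type*} (r : α → α → Prop) : Cardinal :=
  sInf { c | ∃ C : Set α, TCofinal r C ∧ #C = c }

/-- `U` is a nonprincipal ultrafilter. -/
def Nonprincipal (U : Ultrafilter ℕ) : Prop := ∀ a : ℕ, U ≠ pure a

/-- `⟨U, ⊇⟩`: the members of `U` ordered by reverse inclusion (`A ≤ B` iff `A ⊇ B`). -/
def revIncl (U : Ultrafilter ℕ) : {A : Set ℕ // A ∈ U} → {A : Set ℕ // A ∈ U} → Prop :=
  fun A B => (B : Set ℕ) ⊆ (A : Set ℕ)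

/-- `⟨U, ⊇*⟩`: the members of `U` preordered by reverse almost inclusion
(`A ≤ B` iff `A ⊇* B` iff `B \\ A` is finite). -/
def revAlmostIncl (U : Ultrafilter ℕ) : {A : Set ℕ // A ∈ U} → {A : Set ℕ // A ∈ U} → Prop :=
  fun A B => ((B : Set ℕ) \ (A : Set ℕ)).Finite

/-!
Pulling back along a Tukey map `f : ⟨U, ⊇⟩ → Q`, each `f⁻¹(Qₙ)` has all its countable
subsets bounded, because `Qₙ` is `ω₁`-directed. In `⟨U, ⊇⟩` this already makes `f⁻¹(Qₙ)`
bounded: an intersection of subsets of `ℕ` is attained by a countable subfamily. So `U` is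
covered by countably many bounded sets, their bounds form a countable cofinal set, and
`cf(⟨U, ⊇⟩) ≤ ℵ₀`, contradicting `ℵ₀ < cf(cf(⟨U, ⊇⟩)) ≤ cf(⟨U, ⊇⟩)`.
-/

theorem Set.exists_countable_subset_sInter_eq {α : Type*} [Countable α] (X : Set (Set α)) :
    ∃ S ⊆ X, S.Countable ∧ ⋂₀ S = ⋂₀ X := by
  have hwit : ∀ a : ↥(⋂₀ X)ᶜ, ∃ A ∈ X, (a : α) ∉ A := fun a => by
    simpa only [Set.mem_compl_iff, Set.mem_sInter, not_forall, exists_prop] using a.2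
  choose A hAX haA using hwit
  refine ⟨Set.range A, Set.range_subset_iff.2 hAX, Set.countable_range A, ?_⟩
  refine (Set.sInter_subset_sInter (Set.range_subset_iff.2 hAX)).antisymm' fun a ha => ?_
  by_contra hna
  exact haA ⟨a, hna⟩ (ha _ ⟨⟨a, hna⟩, rfl⟩)

theorem IsTukeyMap.tBounded_of_tBounded_image {α β : Type*} {ra : α → α → Prop}
    {rb : β → β → Prop} {f : α → β} (hf : IsTukeyMap ra rb f) {S : Set α}
    (hS : TBounded rb (f '' S)) : TBounded ra S :=
  not_not.1 fun h => hf S h hS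

theorem tCof_le_aleph0_of_iUnion_tBounded {α : Type*} (r : α → α → Prop) (X : ℕ → Set α)
    (hcov : (⋃ n, X n) = Set.univ) (hX : ∀ n, TBounded r (X n)) : tCof r ≤ ℵ₀ := by
  choose b hb using hX
  have hcof : TCofinal r (Set.range b) := fun a => by
    obtain ⟨n, hn⟩ := Set.mem_iUnion.1 (hcov.symm ▸ Set.mem_univ a : a ∈ ⋃ n, X n)
    exact ⟨b n, ⟨n, rfl⟩, hb n a hn⟩
  calc tCof r ≤ #(Set.range b) := csInf_le' ⟨_, hcof, rfl⟩
    _ ≤ ℵ₀ := (Set.countable_range b).le_aleph0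

theorem revIncl_tBounded_of_countable_tBounded (U : Ultrafilter ℕ)
    (X : Set {A : Set ℕ // A ∈ U})
    (hX : ∀ S ⊆ X, S.Countable → TBounded (revIncl U) S) :
    TBounded (revIncl U) X := by
  obtain ⟨S, hSX, hSc, hSeq⟩ :=
    Set.exists_countable_subset_sInter_eq (Subtype.val '' X)
  obtain ⟨B, hB⟩ := hX (Subtype.val ⁻¹' S ∩ X) Set.inter_subset_right
    ((hSc.preimage Subtype.val_injective).mono Set.inter_subset_left)
  have hBS : (B : Set ℕ) ⊆ ⋂₀ S := Set.subset_sInter fun A hA => by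
    obtain ⟨A', hA'X, rfl⟩ := hSX hA
    exact hB A' ⟨hA, hA'X⟩
  refine ⟨B, fun A hA => ?_⟩
  exact hBS.trans (hSeq ▸ Set.sInter_subset_of_mem ⟨A, hA, rfl⟩)

theorem stmt17_general {Q : Type} (r : Q → Q → Prop)
    (Qn : ℕ → Set Q) (hcov : (⋃ n, Qn n) = Set.univ)
    (hdir : ∀ n, ∀ S ⊆ Qn n, S.Countable → ∃ b ∈ Qn n, ∀ x ∈ S, r x b) :
    ∀ U : Ultrafilter ℕ, Nonprincipal U →
      Cardinal.aleph0 < (tCof (revIncl U)).ord.cof →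
      ¬ TukeyLE (revIncl U) r := by
  rintro U - hcf ⟨f, hf⟩
  have hpre : ∀ n, TBounded (revIncl U) (f ⁻¹' Qn n) := fun n =>
    revIncl_tBounded_of_countable_tBounded U _ fun S hS hSc => by
      obtain ⟨b, -, hb⟩ := hdir n (f '' S) (Set.image_subset_iff.2 hS) (hSc.image f)
      exact hf.tBounded_of_tBounded_image ⟨b, hb⟩
  have hcov' : (⋃ n, f ⁻¹' Qn n) = Set.univ := by
    rw [← Set.preimage_iUnion, hcov, Set.preimage_univ]
  exact (hcf.trans_le (Ordinal.cof_ord_le _)).not_ge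
    (tCof_le_aleph0_of_iUnion_tBounded _ _ hcov' hpre)

/-- If a directed set `Q` is a countable union of `ω₁`-directed subsets, then
`⟨U, ⊇⟩ ≰_T Q` for every nonprincipal ultrafilter `U` on `ω` such that the cardinal
`cf(⟨U, ⊇⟩)` has uncountable cofinality. -/
theorem stmt17 {Q : Type} (r : Q → Q → Prop) (hQ : IsDirectedSet r)
    (Qn : ℕ → Set Q) (hcov : (⋃ n, Qn n) = Set.univ)
    (hdir : ∀ n, ∀ S ⊆ Qn n, S.Countable → ∃ b ∈ Qn n, ∀ x ∈ S, r x b) :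
    ∀ U : Ultrafilter ℕ, Nonprincipal U →
      Cardinal.aleph0 < (tCof (revIncl U)).ord.cof →
      ¬ TukeyLE (revIncl U) r :=
  stmt17_general r Qn hcov hdir
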